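/- For every (ξ,η) ∈ 𝒞₀, the gradient ∇Φ(ξ,η) = (θ, −ω) is not a linear combination of ∇Υ(ξ,η) = (2ξ, −2η) and ∇Υ₀(ξ,η); equivalently, there exists v ∈ ℝ^{N+2} with ⟨∇Υ(ξ,η), v⟩ = 0, ⟨∇Υ₀(ξ,η), v⟩ = 0 and ⟨∇Φ(ξ,η), v⟩ ≠ 0, i.e. the differential of Φ does not vanish on the tangent space to 𝒞₀. -/

import Mathlib

/-- The tail `ξ̄ = (ξ₁, …, ξ_m)` of a vector `ξ = (ξ₀, ξ̄) ∈ ℝ^{m+1}`. -/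
noncomputable def tailVec {m : ℕ} (ξ : EuclideanSpace ℝ (Fin (m + 1))) :
    EuclideanSpace ℝ (Fin m) := WithLp.toLp 2 (fun (i : Fin m) => ξ i.succ)

/-!
Only the 0-th coordinates matter. Reading `(θ, -ω) = α ∇Υ + α₀ ∇Υ₀` in the 0-th coordinate of
both factors and subtracting eliminates `α₀` and gives `θ₀ + ω₀ = 2α(ξ₀ + η₀) = 0` on
`{Υ₀ = 0}`. For the same reason the tangent vector `(e₀, -e₀)` is orthogonal to `∇Υ₀`, and to
`∇Υ` because `ξ₀ + η₀ = 0`, while `Φ` has derivative `θ₀ + ω₀ ≠ 0` along it.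
-/

open EuclideanSpace

lemma apply_zero_add_apply_zero_eq_of_eq_combination {m k : ℕ}
    {x ξ : EuclideanSpace ℝ (Fin (m + 1))} {y η : EuclideanSpace ℝ (Fin (k + 1))} {α α₀ : ℝ}
    (h : (x, -y) = α • ((2 : ℝ) • ξ, -((2 : ℝ) • η)) +
      α₀ • ((single 0 1 : EuclideanSpace ℝ (Fin (m + 1))),
        (single 0 1 : EuclideanSpace ℝ (Fin (k + 1))))) :
    x 0 + y 0 = 2 * α * (ξ 0 + η 0) := by
  have hx := congrArg (fun p => p.1 0) h
  have hy := congrArg (fun p => p.2 0) h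
  simp only [Prod.smul_mk, Prod.mk_add_mk, PiLp.add_apply, PiLp.smul_apply, PiLp.neg_apply,
    smul_eq_mul, PiLp.single_apply] at hx hy
  linarith

lemma inner_single_zero_add_inner_neg_neg_single_zero {m k : ℕ}
    (x : EuclideanSpace ℝ (Fin (m + 1))) (y : EuclideanSpace ℝ (Fin (k + 1))) :
    inner ℝ x (single 0 1 : EuclideanSpace ℝ (Fin (m + 1))) +
      inner ℝ (-y) (-(single 0 1 : EuclideanSpace ℝ (Fin (k + 1)))) = x 0 + y 0 := by
  simp [inner_single_right]

theorem dPhi_nonzero_on_tangent_C0_general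
    (d n : ℕ)
    (θ : EuclideanSpace ℝ (Fin (d + 1))) (ω : EuclideanSpace ℝ (Fin (n + 1)))
    (hnontang : θ 0 + ω 0 ≠ 0)
    (ξ : EuclideanSpace ℝ (Fin (d + 1))) (η : EuclideanSpace ℝ (Fin (n + 1)))
    (hΥ₀ : ξ 0 + η 0 = 0) :
    (∀ α α₀ : ℝ,
        (θ, -ω) ≠ (α • ((2 : ℝ) • ξ, -((2 : ℝ) • η)) +
          α₀ • ((EuclideanSpace.single 0 (1 : ℝ) : EuclideanSpace ℝ (Fin (d + 1))),
                (EuclideanSpace.single 0 (1 : ℝ) : EuclideanSpace ℝ (Fin (n + 1)))))) ∧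
    ∃ (v₁ : EuclideanSpace ℝ (Fin (d + 1))) (v₂ : EuclideanSpace ℝ (Fin (n + 1))),
      (inner ℝ ((2 : ℝ) • ξ) v₁ + inner ℝ (-((2 : ℝ) • η)) v₂ : ℝ) = 0 ∧
      (inner ℝ (EuclideanSpace.single 0 (1 : ℝ) : EuclideanSpace ℝ (Fin (d + 1))) v₁
        + inner ℝ (EuclideanSpace.single 0 (1 : ℝ) : EuclideanSpace ℝ (Fin (n + 1))) v₂ : ℝ) = 0 ∧
      (inner ℝ θ v₁ + inner ℝ (-ω) v₂ : ℝ) ≠ 0 := by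
  refine ⟨fun α α₀ h => hnontang ?_, single 0 1, -single 0 1, ?_, ?_, ?_⟩
  · rw [apply_zero_add_apply_zero_eq_of_eq_combination h, hΥ₀, mul_zero]
  · rw [inner_single_zero_add_inner_neg_neg_single_zero, PiLp.smul_apply, PiLp.smul_apply,
      ← smul_add, hΥ₀, smul_zero]
  · simp
  · rwa [inner_single_zero_add_inner_neg_neg_single_zero]

/-- for every `(ξ,η) ∈ 𝒞₀`, the gradient `∇Φ(ξ,η) = (θ, −ω)` is not a linear
combination of `∇Υ(ξ,η) = (2ξ, −2η)` and `∇Υ₀(ξ,η)`; equivalently there is a vector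
`v = (v₁, v₂) ∈ ℝ^{N+2}` orthogonal to `∇Υ(ξ,η)` and `∇Υ₀(ξ,η)` but not to `∇Φ(ξ,η)`,
i.e. the differential of `Φ` does not vanish on the tangent space to `𝒞₀`. -/
theorem dPhi_nonzero_on_tangent_C0
    (d n : ℕ) (hd : 1 ≤ d) (hn : 1 ≤ n)
    (θ : EuclideanSpace ℝ (Fin (d + 1))) (ω : EuclideanSpace ℝ (Fin (n + 1)))
    (hθ : ‖θ‖ = 1) (hω : ‖ω‖ = 1) (hnontang : θ 0 + ω 0 ≠ 0)
    (ξ : EuclideanSpace ℝ (Fin (d + 1))) (η : EuclideanSpace ℝ (Fin (n + 1)))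
    (hne : (ξ, η) ≠ 0)
    (hΥ : ‖ξ‖ ^ 2 - ‖η‖ ^ 2 = 0)
    (hΥ₀ : ξ 0 + η 0 = 0)
    (hbar : tailVec ξ ≠ 0) :
    (∀ α α₀ : ℝ,
        (θ, -ω) ≠ (α • ((2 : ℝ) • ξ, -((2 : ℝ) • η)) +
          α₀ • ((EuclideanSpace.single 0 (1 : ℝ) : EuclideanSpace ℝ (Fin (d + 1))),
                (EuclideanSpace.single 0 (1 : ℝ) : EuclideanSpace ℝ (Fin (n + 1)))))) ∧
    ∃ (v₁ : EuclideanSpace ℝ (Fin (d + 1))) (v₂ : EuclideanSpace ℝ (Fin (n + 1))),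
      (inner ℝ ((2 : ℝ) • ξ) v₁ + inner ℝ (-((2 : ℝ) • η)) v₂ : ℝ) = 0 ∧
      (inner ℝ (EuclideanSpace.single 0 (1 : ℝ) : EuclideanSpace ℝ (Fin (d + 1))) v₁
        + inner ℝ (EuclideanSpace.single 0 (1 : ℝ) : EuclideanSpace ℝ (Fin (n + 1))) v₂ : ℝ) = 0 ∧
      (inner ℝ θ v₁ + inner ℝ (-ω) v₂ : ℝ) ≠ 0 :=
  dPhi_nonzero_on_tangent_C0_general d n θ ω hnontang ξ η hΥ₀
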